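/- Let two environments e = 1, 2 each generate a centered bivariate Gaussian pair (X^(e), Y^(e)) under the spurious model X^(e) = α^(e) Y^(e) + ξ^(e), with Y^(e) ~ N(0, σ_y²), ξ^(e) ~ N(0, τ_e²) independent of Y^(e). Suppose the conditional distribution of Y^(e) given X^(e) is the same Gaussian linear model in both environments, i.e., the conditional mean slope b^(e) = α^(e) σ_y² / ((α^(e))² σ_y² + τ_e²) and conditional variance v^(e) = σ_y² τ_e²/((α^(e))² σ_y² + τ_e²) satisfy b^(1) = b^(2) and v^(1) = v^(2). Then (α^(1))²/τ_1² = (α^(2))²/τ_2², i.e., α^(1)/τ_1² determines the same ratio; equivalently, heterogeneity of α^(e)/τ_e structure with (α^(1))²/τ_1² ≠ (α^(2))²/τ_2² implies the conditional distribution of Y given X differs across the two environments. -/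

import Mathlib

/-! The conditional precision of `Y` given `X` is the prior precision plus the signal-to-noise
ratio, `v⁻¹ = σy⁻² + α²/τ²`, so equal conditional variances force equal ratios. -/

theorem inv_condVar_eq_snr_add_inv {σ τ : ℝ} (hσ : σ ≠ 0) (hτ : τ ≠ 0) (a : ℝ) :
    (σ * τ / (a ^ 2 * σ + τ))⁻¹ = a ^ 2 / τ + σ⁻¹ := by
  rw [inv_div, add_div, mul_comm σ τ, mul_div_mul_right _ _ hσ, div_mul_cancel_left₀ hτ]

theorem stmt_2_general (σy2 τ1sq τ2sq α1 α2 : ℝ) (hσ : 0 < σy2) (h1 : 0 < τ1sq) (h2 : 0 < τ2sq)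
    (hv : σy2 * τ1sq / (α1 ^ 2 * σy2 + τ1sq) = σy2 * τ2sq / (α2 ^ 2 * σy2 + τ2sq)) :
    α1 ^ 2 / τ1sq = α2 ^ 2 / τ2sq := by
  have hprec := congrArg Inv.inv hv
  rw [inv_condVar_eq_snr_add_inv hσ.ne' h1.ne', inv_condVar_eq_snr_add_inv hσ.ne' h2.ne'] at hprec
  exact add_right_cancel hprec

/-- If in two environments the spurious model `X⁽ᵉ⁾ = α⁽ᵉ⁾Y⁽ᵉ⁾ + ξ⁽ᵉ⁾`,
`Y⁽ᵉ⁾ ~ N(0, σy²)`, `ξ⁽ᵉ⁾ ~ N(0, τₑ²)` yields the same conditional Gaussian law of `Y` given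
`X` (same conditional-mean slope and same conditional variance), then
`(α⁽¹⁾)²/τ₁² = (α⁽²⁾)²/τ₂²`.  (Here `τ1sq`, `τ2sq` denote the variances `τ₁²`, `τ₂²`.) -/
theorem stmt_2 (σy2 τ1sq τ2sq α1 α2 : ℝ) (hσ : 0 < σy2) (h1 : 0 < τ1sq) (h2 : 0 < τ2sq)
    (hb : α1 * σy2 / (α1 ^ 2 * σy2 + τ1sq) = α2 * σy2 / (α2 ^ 2 * σy2 + τ2sq))
    (hv : σy2 * τ1sq / (α1 ^ 2 * σy2 + τ1sq) = σy2 * τ2sq / (α2 ^ 2 * σy2 + τ2sq)) :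
    α1 ^ 2 / τ1sq = α2 ^ 2 / τ2sq :=
  stmt_2_general σy2 τ1sq τ2sq α1 α2 hσ h1 h2 hv
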